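/- arXiv:1506.06715 — 2 statements merged into one kernel-verified Lean document; each statement's English description precedes it below -/
import Mathlib

section
/- Let f be a non-negative monotone submodular set function on a finite ground set N with f(∅) = 0, let k ≥ 1 and β > 0, let OPT ⊆ N with |OPT| ≤ k, and let ALG be a β-nice algorithm for f with output size bound k' = k. Consider a random partition of N into m parts, and suppose that for every assignment g a set S(g) ⊆ ALG(T_1(g)) ∪ … ∪ ALG(T_m(g)) with |S(g)| ≤ k satisfies f(S(g)) ≥ (1 − 1/e)·f( OPT ∩ (ALG(T_1(g)) ∪ … ∪ ALG(T_m(g))) ) (e.g., S(g) is the output of the greedy algorithm on the union of the core-sets). Then 𝔼[ max{ f(S), max_{1 ≤ i ≤ m} f(ALG(T_i)) } ] ≥ ((1 − 1/e)/(1 + (1 − 1/e)(1 + β)))·f(OPT). In particular for β = 1 the right-hand side is at least 0.27·f(OPT). -/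
/-!
Fix the part index `0` and call `x ∈ OPT` rejected for `g` if `x ∉ ALG (T₀ ∪ {x})`. The part
containing `x` is distributed exactly like `T₀ ∪ {x}`, so over all assignments every `x ∈ OPT` is
counted `m ^ |N|` times in total, either as an element of `⋃ ALG(Tᵢ)` or as a rejected one.
Writing `f(OPT)` as a sum of insertion marginals `δ`, which by submodularity bound `f` from below
on subsets of `OPT`, gives `𝔼 f(OPT ∩ ⋃ ALG(Tᵢ)) + 𝔼 f(rejected) ≥ f(OPT)`. By niceness each
rejected element adds at most `β f(ALG T₀) / k` to `ALG T₀`, and there are at most `k` of them, so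
`f(rejected) ≤ (1 + β) f(ALG T₀)`. Finally `f(S) ≥ (1 - 1/e) f(OPT ∩ ⋃ ALG(Tᵢ))`.
-/

open Finset

/-- The part of a random partition: `T_i(g) = {x : g x = i}`. -/
def part {α : Type*} [Fintype α] [DecidableEq α] {m : ℕ} (g : α → Fin m) (i : Fin m) :
    Finset α :=
  Finset.univ.filter fun a => g a = i
section Submodular

variable {α : Type*} [DecidableEq α]

def IsSubmodular (f : Finset α → ℝ) : Prop :=
  ∀ X Y : Finset α, X ⊆ Y → ∀ x, x ∉ Y → f (insert x Y) - f Y ≤ f (insert x X) - f X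

variable {f : Finset α → ℝ}

theorem IsSubmodular.apply_union_le_add_sum (hf : IsSubmodular f) (A E : Finset α) :
    f (A ∪ E) ≤ f A + ∑ x ∈ E, (f (insert x A) - f A) := by
  induction E using Finset.induction_on with
  | empty => simp
  | @insert x E hx ih =>
    rw [sum_insert hx, union_insert]
    by_cases hxA : x ∈ A
    · rw [insert_eq_of_mem hxA, insert_eq_of_mem (mem_union_left E hxA)]
      linarith
    · linarith [hf A (A ∪ E) subset_union_left x (by simp [hxA, hx])]

theorem IsSubmodular.apply_union_le_add_card_mul (hf : IsSubmodular f) {A E : Finset α} {c : ℝ}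
    (hc : ∀ x ∈ E, f (insert x A) - f A ≤ c) : f (A ∪ E) ≤ f A + #E * c := by
  have := sum_le_card_nsmul E _ c hc
  rw [nsmul_eq_mul] at this
  linarith [hf.apply_union_le_add_sum A E]

/-- The weights are the marginals along an insertion order of `O`. -/
theorem IsSubmodular.exists_modular_lower_bound (hf : IsSubmodular f) (h0 : f ∅ = 0)
    (O : Finset α) : ∃ δ : α → ℝ, ∑ x ∈ O, δ x = f O ∧ ∀ E ⊆ O, ∑ x ∈ E, δ x ≤ f E := by
  induction O using Finset.induction_on with
  | empty => exact ⟨0, by simp [h0], fun E hE => by simp [subset_empty.mp hE, h0]⟩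
  | @insert x O hx ih =>
    obtain ⟨δ, hsum, hle⟩ := ih
    refine ⟨Function.update δ x (f (insert x O) - f O), ?_, fun E hE => ?_⟩
    · rw [sum_insert hx, Function.update_self, sum_update_of_notMem hx, hsum]
      ring
    by_cases hxE : x ∈ E
    · have hE' : E.erase x ⊆ O := subset_insert_iff.mp hE
      have hmarg := hf (E.erase x) O hE' x hx
      rw [insert_erase hxE] at hmarg
      rw [sum_update_of_mem hxE, sdiff_singleton_eq_erase]
      linarith [hle _ hE']
    · rw [sum_update_of_notMem hxE]
      exact hle E ((subset_insert_iff_of_notMem hxE).mp hE)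

end Submodular

section Nice

variable {α : Type*} [DecidableEq α]

def rejected (ALG : Finset α → Finset α) (O T : Finset α) : Finset α :=
  O.filter fun x => x ∉ ALG (insert x T)

variable {f : Finset α → ℝ} {ALG : Finset α → Finset α} {β : ℝ} {k : ℕ}

theorem marginal_le_of_notMem_insert
    (hind : ∀ T : Finset α, ∀ x ∈ T \ ALG T, ALG (T.erase x) = ALG T)
    (hmarg : ∀ T : Finset α, ∀ x ∈ T \ ALG T,
      f (insert x (ALG T)) - f (ALG T) ≤ β * f (ALG T) / k)
    {T : Finset α} {x : α} (hx : x ∉ ALG (insert x T)) :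
    f (insert x (ALG T)) - f (ALG T) ≤ β * f (ALG T) / k := by
  have hxT : x ∈ insert x T \ ALG (insert x T) := mem_sdiff.mpr ⟨mem_insert_self x T, hx⟩
  by_cases hmem : x ∈ T
  · rw [insert_eq_of_mem hmem] at hxT
    exact hmarg T x hxT
  · have hALG : ALG T = ALG (insert x T) := by
      rw [← hind _ x hxT, erase_insert hmem]
    rw [hALG]
    exact hmarg _ x hxT

theorem IsSubmodular.apply_rejected_le (hf : IsSubmodular f) (hmono : Monotone f)
    (hind : ∀ T : Finset α, ∀ x ∈ T \ ALG T, ALG (T.erase x) = ALG T)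
    (hmarg : ∀ T : Finset α, ∀ x ∈ T \ ALG T,
      f (insert x (ALG T)) - f (ALG T) ≤ β * f (ALG T) / k)
    (hβ : 0 ≤ β) {O T : Finset α} (hO : #O ≤ k) (hT : 0 ≤ f (ALG T)) :
    f (rejected ALG O T) ≤ (1 + β) * f (ALG T) := by
  have hcard : (#(rejected ALG O T) : ℝ) ≤ k := mod_cast (card_filter_le _ _).trans hO
  have hsum : (#(rejected ALG O T) : ℝ) * (β * f (ALG T) / k) ≤ β * f (ALG T) := by
    rw [mul_div_assoc', mul_comm, mul_div_assoc]
    exact mul_le_of_le_one_right (by positivity) (div_le_one_of_le₀ hcard k.cast_nonneg)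
  calc f (rejected ALG O T) ≤ f (ALG T ∪ rejected ALG O T) := hmono subset_union_right
    _ ≤ f (ALG T) + #(rejected ALG O T) * (β * f (ALG T) / k) :=
      hf.apply_union_le_add_card_mul fun x hx =>
        marginal_le_of_notMem_insert hind hmarg (mem_filter.mp hx).2
    _ ≤ (1 + β) * f (ALG T) := by linarith

end Nice

section DoubleCounting

variable {α ι : Type*} [Fintype ι]

theorem sum_sum_filter_eq_sum_card_mul (O : Finset α) (δ : α → ℝ) (P : ι → α → Prop)
    [∀ i, DecidablePred (P i)] :
    ∑ i, ∑ y ∈ O with P i y, δ y = ∑ y ∈ O, #{i | P i y} * δ y := by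
  simp_rw [sum_filter]
  rw [sum_comm]
  refine sum_congr rfl fun y _ => ?_
  rw [← sum_filter, sum_const, nsmul_eq_mul]

theorem sum_sum_filter_add_sum_sum_filter (O : Finset α) (δ : α → ℝ) (P Q : ι → α → Prop)
    [∀ i, DecidablePred (P i)] [∀ i, DecidablePred (Q i)]
    (h : ∀ y ∈ O, #{i | P i y} + #{i | Q i y} = Fintype.card ι) :
    ∑ i, ∑ y ∈ O with P i y, δ y + ∑ i, ∑ y ∈ O with Q i y, δ y =
      Fintype.card ι * ∑ y ∈ O, δ y := by
  rw [sum_sum_filter_eq_sum_card_mul, sum_sum_filter_eq_sum_card_mul, ← sum_add_distrib, mul_sum]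
  refine sum_congr rfl fun y hy => ?_
  rw [← add_mul, ← h y hy, Nat.cast_add]

end DoubleCounting

section Partition

variable {α : Type*} [Fintype α] [DecidableEq α] {m : ℕ}

/-- Relabelling the parts by the transposition `(i, g x)` away from `x` is an involution on
assignments which turns `T_i ∪ {x}` into the part of `x`. -/
theorem sum_part_apply_self_eq_sum_insert_part {M : Type*} [AddCommMonoid M] (x : α)
    (i : Fin m) (F : Finset α → M) :
    ∑ g : α → Fin m, F (part g (g x)) = ∑ g : α → Fin m, F (insert x (part g i)) := by
  let Φ : (α → Fin m) → (α → Fin m) := fun g a => if a = x then g x else Equiv.swap i (g x) (g a)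
  have hΦ : Function.Involutive Φ := fun g => funext fun a => by
    by_cases h : a = x
    · simp [Φ, h]
    · simp [Φ, h, Equiv.swap_apply_self]
  refine Fintype.sum_bijective Φ hΦ.bijective _ _ fun g => congrArg F ?_
  ext a
  by_cases h : a = x
  · simp [part, h]
  · simp [part, Φ, h, Equiv.swap_apply_eq_iff]

variable {ALG : Finset α → Finset α}

theorem mem_biUnion_part_iff (hALG : ∀ T, ALG T ⊆ T) (g : α → Fin m) (x : α) :
    x ∈ univ.biUnion (fun i => ALG (part g i)) ↔ x ∈ ALG (part g (g x)) := by
  refine ⟨fun hx => ?_, fun hx => mem_biUnion.mpr ⟨g x, mem_univ _, hx⟩⟩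
  obtain ⟨i, -, hi⟩ := mem_biUnion.mp hx
  have : g x = i := by simpa [part] using hALG _ hi
  rwa [this]

theorem card_mem_biUnion_add_card_mem_rejected (hALG : ∀ T, ALG T ⊆ T) (i : Fin m) (x : α) :
    #{g : α → Fin m | x ∈ univ.biUnion fun j => ALG (part g j)} +
      #{g : α → Fin m | x ∉ ALG (insert x (part g i))} = Fintype.card (α → Fin m) := by
  have hsel : #{g : α → Fin m | x ∈ univ.biUnion fun j => ALG (part g j)} =
      #{g : α → Fin m | x ∈ ALG (insert x (part g i))} := by
    simp_rw [card_filter, mem_biUnion_part_iff hALG]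
    exact sum_part_apply_self_eq_sum_insert_part x i fun T => if x ∈ ALG T then 1 else 0
  rw [hsel, card_filter_add_card_filter_not, card_univ]

theorem sum_weight_inter_add_sum_weight_rejected (hALG : ∀ T, ALG T ⊆ T) (i : Fin m)
    (O : Finset α) (δ : α → ℝ) :
    ∑ g : α → Fin m, ∑ y ∈ O ∩ univ.biUnion (fun j => ALG (part g j)), δ y +
      ∑ g : α → Fin m, ∑ y ∈ rejected ALG O (part g i), δ y =
      Fintype.card (α → Fin m) * ∑ y ∈ O, δ y := by
  simp_rw [← filter_mem_eq_inter]
  exact sum_sum_filter_add_sum_sum_filter O δ _ _ fun y _ =>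
    card_mem_biUnion_add_card_mem_rejected hALG i y

end Partition

theorem div_mul_le_sum_max_div {ι : Type*} [Fintype ι] [Nonempty ι] {a b s : ι → ℝ}
    {c l F : ℝ} (hl : 0 ≤ l) (hc : 0 ≤ c) (hF : Fintype.card ι * F ≤ ∑ i, (a i + c * b i))
    (hs : ∀ i, l * a i ≤ s i) :
    l / (1 + l * c) * F ≤ (∑ i, max (s i) (b i)) / Fintype.card ι := by
  have hpoint : ∀ i, l * (a i + c * b i) ≤ (1 + l * c) * max (s i) (b i) := fun i => by
    nlinarith [hs i, le_max_left (s i) (b i), le_max_right (s i) (b i), mul_nonneg hl hc]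
  have hsum : l * (Fintype.card ι * F) ≤ (1 + l * c) * ∑ i, max (s i) (b i) := by
    calc l * (Fintype.card ι * F) ≤ ∑ i, l * (a i + c * b i) := by
          rw [← mul_sum]; exact mul_le_mul_of_nonneg_left hF hl
      _ ≤ _ := by rw [mul_sum]; exact sum_le_sum fun i _ => hpoint i
  rw [div_mul_eq_mul_div, div_le_div_iff₀ (by positivity) (by positivity)]
  linarith

theorem le_one_sub_inv_exp_div : (0.27 : ℝ) ≤
    (1 - 1 / Real.exp 1) / (1 + (1 - 1 / Real.exp 1) * (1 + 1)) := by
  have he : (2.7182818283 : ℝ) < Real.exp 1 := Real.exp_one_gt_d9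
  have hinv : 1 / Real.exp 1 ≤ 19 / 46 := by
    rw [div_le_div_iff₀ (by positivity) (by norm_num)]; linarith
  rw [le_div_iff₀ (by linarith)]
  linarith

theorem stmt_7_general {α : Type*} [DecidableEq α] [Fintype α] {m : ℕ} [NeZero m]
    (f : Finset α → ℝ)
    (hsub : ∀ X Y : Finset α, X ⊆ Y → ∀ x, x ∉ Y →
      f (insert x Y) - f Y ≤ f (insert x X) - f X)
    (hmono : ∀ X Y : Finset α, X ⊆ Y → f X ≤ f Y)
    (hnonneg : ∀ S : Finset α, 0 ≤ f S)
    (hempty : f ∅ = 0)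
    (k : ℕ) (β : ℝ) (hβ : 0 < β)
    (OPT : Finset α) (hOPTcard : OPT.card ≤ k)
    (ALG : Finset α → Finset α)
    (hALGsub : ∀ T, ALG T ⊆ T)
    (hALGind : ∀ T : Finset α, ∀ x ∈ T \ ALG T, ALG (T.erase x) = ALG T)
    (hALGmarg : ∀ T : Finset α, ∀ x ∈ T \ ALG T,
      f (insert x (ALG T)) - f (ALG T) ≤ β * f (ALG T) / k)
    (S : (α → Fin m) → Finset α)
    (hSval : ∀ g, f (S g) ≥ (1 - 1 / Real.exp 1) *
      f (OPT ∩ Finset.univ.biUnion fun i => ALG (part g i))) :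
    (∑ g : α → Fin m,
        max (f (S g)) (Finset.univ.sup' Finset.univ_nonempty fun i => f (ALG (part g i)))) /
        (m : ℝ) ^ Fintype.card α
      ≥ ((1 - 1 / Real.exp 1) / (1 + (1 - 1 / Real.exp 1) * (1 + β))) * f OPT ∧
    (β = 1 →
      (∑ g : α → Fin m,
          max (f (S g)) (Finset.univ.sup' Finset.univ_nonempty fun i => f (ALG (part g i)))) /
          (m : ℝ) ^ Fintype.card α
        ≥ 0.27 * f OPT) := by
  have hf : IsSubmodular f := hsub
  obtain ⟨δ, hδ_sum, hδ_le⟩ := hf.exists_modular_lower_bound hempty OPT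
  have hcover : (Fintype.card (α → Fin m) : ℝ) * f OPT ≤ ∑ g : α → Fin m,
      (f (OPT ∩ univ.biUnion fun i => ALG (part g i)) +
        (1 + β) * univ.sup' univ_nonempty fun i => f (ALG (part g i))) := by
    rw [← hδ_sum, ← sum_weight_inter_add_sum_weight_rejected hALGsub 0, ← sum_add_distrib]
    refine sum_le_sum fun g _ => add_le_add (hδ_le _ inter_subset_left) ?_
    calc ∑ y ∈ rejected ALG OPT (part g 0), δ y ≤ f (rejected ALG OPT (part g 0)) :=
          hδ_le _ (filter_subset _ _)
      _ ≤ (1 + β) * f (ALG (part g 0)) :=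
          hf.apply_rejected_le hmono hALGind hALGmarg hβ.le hOPTcard (hnonneg _)
      _ ≤ _ := by gcongr; exact le_sup' (fun i => f (ALG (part g i))) (mem_univ 0)
  have hlam : 0 ≤ 1 - 1 / Real.exp 1 := by
    rw [sub_nonneg, div_le_one (Real.exp_pos 1)]; exact Real.one_le_exp zero_le_one
  have hmain := div_mul_le_sum_max_div hlam (by linarith) hcover hSval
  rw [Fintype.card_fun, Fintype.card_fin, Nat.cast_pow] at hmain
  refine ⟨hmain, fun hβ1 => ?_⟩
  subst hβ1
  exact (mul_le_mul_of_nonneg_right le_one_sub_inv_exp_div (hnonneg OPT)).trans hmain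

/-- overall distributed approximation factor for monotone submodular
maximization: if, for every realization of the random partition, a post-processing step
returns `S(g) ⊆ ⋃_i ALG(T_i(g))` of size at most `k` with
`f(S(g)) ≥ (1−1/e)·f(OPT ∩ ⋃_i ALG(T_i(g)))`, then
`𝔼[max(f(S), max_i f(ALG(T_i)))] ≥ ((1−1/e)/(1+(1−1/e)(1+β)))·f(OPT)`;
in particular for `β = 1` it is at least `0.27·f(OPT)`. -/
theorem stmt_7 {α : Type*} [DecidableEq α] [Fintype α] {m : ℕ} [NeZero m]
    (f : Finset α → ℝ)
    (hsub : ∀ X Y : Finset α, X ⊆ Y → ∀ x, x ∉ Y →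
      f (insert x Y) - f Y ≤ f (insert x X) - f X)
    (hmono : ∀ X Y : Finset α, X ⊆ Y → f X ≤ f Y)
    (hnonneg : ∀ S : Finset α, 0 ≤ f S)
    (hempty : f ∅ = 0)
    (k : ℕ) (hk : 1 ≤ k) (β : ℝ) (hβ : 0 < β)
    (OPT : Finset α) (hOPTcard : OPT.card ≤ k)
    (ALG : Finset α → Finset α)
    (hALGsub : ∀ T, ALG T ⊆ T)
    (hALGcard : ∀ T, (ALG T).card ≤ k)
    (hALGind : ∀ T : Finset α, ∀ x ∈ T \ ALG T, ALG (T.erase x) = ALG T)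
    (hALGmarg : ∀ T : Finset α, ∀ x ∈ T \ ALG T,
      f (insert x (ALG T)) - f (ALG T) ≤ β * f (ALG T) / k)
    (S : (α → Fin m) → Finset α)
    (hSsub : ∀ g, S g ⊆ Finset.univ.biUnion fun i => ALG (part g i))
    (hScard : ∀ g, (S g).card ≤ k)
    (hSval : ∀ g, f (S g) ≥ (1 - 1 / Real.exp 1) *
      f (OPT ∩ Finset.univ.biUnion fun i => ALG (part g i))) :
    (∑ g : α → Fin m,
        max (f (S g)) (Finset.univ.sup' Finset.univ_nonempty fun i => f (ALG (part g i)))) /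
        (m : ℝ) ^ Fintype.card α
      ≥ ((1 - 1 / Real.exp 1) / (1 + (1 - 1 / Real.exp 1) * (1 + β))) * f OPT ∧
    (β = 1 →
      (∑ g : α → Fin m,
          max (f (S g)) (Finset.univ.sup' Finset.univ_nonempty fun i => f (ALG (part g i)))) /
          (m : ℝ) ^ Fintype.card α
        ≥ 0.27 * f OPT) :=
  stmt_7_general f hsub hmono hnonneg hempty k β hβ OPT hOPTcard ALG hALGsub hALGind hALGmarg S
    hSval
end

section
/- For all real numbers α, λ, r with 0 ≤ α ≤ 1, 0 ≤ λ ≤ 1 and 0 ≤ r ≤ 1, if 1 − α ≥ √2·(e^{−r}·α − λ), then 1 − α + (1 − e^{−r})·α + (1 − r)·λ ≥ 2 − √2. -/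
/-!
Write `E = e^{-r}` and `s = √2`; the goal says `E α ≤ (s - 1) + (1 - r) λ`, and is linear in `α`.
If `λ ≥ E`, the bound `α ≤ 1` suffices because `r e^{-r} ≤ 1/e < √2 - 1`. If `λ < E`, use instead
the hypothesis `α (1 + s E) ≤ 1 + s λ`; since `s² = 2` this reduces to
`(s - 1)(1 - E) + λ (1 - r - s r E) ≥ 0`, which is linear in `λ ∈ [0, E]`. At `λ = E` it is a
concave quadratic in `E`, and `E` lies between `1 - r` and `1 / (1 + r + r²/2)`, so it suffices to
check it at these two endpoints, which is polynomial arithmetic in `r`.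
-/

open Real

lemma exp_neg_one_lt_sqrt_two_sub_one : exp (-1) < √2 - 1 := by
  have hs : 1.4 < √2 := by rw [lt_sqrt (by norm_num)]; norm_num
  linarith [exp_neg_one_lt_d9]

lemma exp_neg_mul_quadratic_le_one {r : ℝ} (hr : 0 ≤ r) :
    exp (-r) * (1 + r + r ^ 2 / 2) ≤ 1 := by
  calc exp (-r) * (1 + r + r ^ 2 / 2) ≤ exp (-r) * exp r := by
        gcongr; exact quadratic_le_exp_of_nonneg hr
    _ = 1 := by rw [← exp_add]; simp

lemma concave_quadratic_nonneg_of_mem_Icc {a b c lo hi x : ℝ} (hc : 0 ≤ c)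
    (hx : x ∈ Set.Icc lo hi) (hlo : 0 ≤ a + b * lo - c * lo ^ 2)
    (hhi : 0 ≤ a + b * hi - c * hi ^ 2) : 0 ≤ a + b * x - c * x ^ 2 := by
  obtain ⟨hlox, hxhi⟩ := hx
  rcases hlox.eq_or_lt with rfl | hlt
  · exact hlo
  -- the chord through the endpoints lies below the parabola by `c (x - lo) (hi - x)`
  have hchord : (hi - lo) * (a + b * x - c * x ^ 2) =
      (hi - x) * (a + b * lo - c * lo ^ 2) + (x - lo) * (a + b * hi - c * hi ^ 2) +
        c * (hi - lo) * ((x - lo) * (hi - x)) := by ring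
  have hpos : 0 ≤ (hi - lo) * (a + b * x - c * x ^ 2) := by
    rw [hchord]
    have hxhi' : 0 ≤ hi - x := sub_nonneg.2 hxhi
    have hlox' : 0 ≤ x - lo := sub_nonneg.2 hlox
    have hlohi : 0 ≤ hi - lo := by linarith
    exact add_nonneg (add_nonneg (mul_nonneg hxhi' hlo) (mul_nonneg hlox' hhi))
      (mul_nonneg (mul_nonneg hc hlohi) (mul_nonneg hlox' hxhi'))
  exact (mul_nonneg_iff_of_pos_left (by linarith)).mp hpos

lemma sqrt_two_quadratic_exp_neg_nonneg {r : ℝ} (hr0 : 0 ≤ r) (hr1 : r ≤ 1) :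
    0 ≤ (√2 - 1) + (2 - √2 - r) * exp (-r) - √2 * r * exp (-r) ^ 2 := by
  have hs2 : √2 ^ 2 = 2 := sq_sqrt (by norm_num)
  have hslo : 1.414 < √2 := by rw [lt_sqrt (by norm_num)]; norm_num
  have hshi : √2 < 1.4143 := by rw [sqrt_lt' (by norm_num)]; norm_num
  set m := 1 + r + r ^ 2 / 2 with hm
  have hm0 : 0 < m := by positivity
  have hE : exp (-r) ∈ Set.Icc (1 - r) (1 / m) := by
    refine ⟨by linarith [add_one_le_exp (-r)], ?_⟩
    rw [le_div_iff₀ hm0]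
    exact exp_neg_mul_quadratic_le_one hr0
  refine concave_quadratic_nonneg_of_mem_Icc (by positivity) hE ?_ ?_
  · nlinarith [mul_nonneg hr0 (sub_nonneg.2 hr1), mul_nonneg (mul_nonneg hr0 hr0) (sub_nonneg.2 hr1)]
  · have hdiv : (√2 - 1) + (2 - √2 - r) * (1 / m) - √2 * r * (1 / m) ^ 2 =
        ((√2 - 1) * m ^ 2 + (2 - √2 - r) * m - √2 * r) / m ^ 2 := by
      field_simp
    rw [hdiv]
    apply div_nonneg _ (by positivity)
    nlinarith [mul_nonneg hr0 (sub_nonneg.2 hr1), mul_nonneg (mul_nonneg hr0 hr0) (sub_nonneg.2 hr1),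
      mul_nonneg (mul_nonneg hr0 hr0) hr0, mul_nonneg (mul_nonneg (mul_nonneg hr0 hr0) hr0) hr0]

theorem stmt_16_general (α lam r : ℝ)
    (hα1 : α ≤ 1)
    (hlam0 : 0 ≤ lam)
    (hr0 : 0 ≤ r) (hr1 : r ≤ 1)
    (h : 1 - α ≥ Real.sqrt 2 * (Real.exp (-r) * α - lam)) :
    1 - α + (1 - Real.exp (-r)) * α + (1 - r) * lam ≥ 2 - Real.sqrt 2 := by
  set s := √2
  set E := exp (-r)
  have hE0 : 0 < E := exp_pos _
  have hE1 : E ≤ 1 := exp_le_one_iff.2 (by linarith)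
  have hs1 : 1 ≤ s := one_le_sqrt.2 (by norm_num)
  suffices hgoal : E * α ≤ s - 1 + (1 - r) * lam by linarith
  rcases le_or_gt E lam with hlarge | hsmall
  · have hrE : r * E ≤ s - 1 :=
      (mul_exp_neg_le_exp_neg_one r).trans exp_neg_one_lt_sqrt_two_sub_one.le
    nlinarith [mul_le_mul_of_nonneg_left hα1 hE0.le,
      mul_le_mul_of_nonneg_left hlarge (sub_nonneg.2 hr1)]
  · have hlin : 0 ≤ (s - 1) * (1 - E) + lam * (1 - r - s * r * E) := by
      have h0 : 0 ≤ (s - 1) * (1 - E) := mul_nonneg (by linarith) (by linarith)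
      have hE : 0 ≤ (s - 1) * (1 - E) + E * (1 - r - s * r * E) := by
        linarith [sqrt_two_quadratic_exp_neg_nonneg hr0 hr1]
      refine (mul_nonneg_iff_of_pos_left hE0).mp ?_
      nlinarith [mul_nonneg (sub_nonneg.2 hsmall.le) h0, mul_nonneg hlam0 hE]
    have hs2 : s ^ 2 = 2 := sq_sqrt (by norm_num)
    refine le_of_mul_le_mul_right ?_ (by positivity : 0 < 1 + s * E)
    calc E * α * (1 + s * E) = E * (α * (1 + s * E)) := by ring
      _ ≤ E * (1 + s * lam) := by gcongr; linarith
      _ ≤ (s - 1 + (1 - r) * lam) * (1 + s * E) := by linear_combination hlin - E * hs2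

/-- for `0 ≤ α ≤ 1`, `0 ≤ λ ≤ 1`, `0 ≤ r ≤ 1`, if
`1 − α ≥ √2·(e^{−r}·α − λ)` then `1 − α + (1 − e^{−r})·α + (1 − r)·λ ≥ 2 − √2`. -/
theorem stmt_16 (α lam r : ℝ)
    (hα0 : 0 ≤ α) (hα1 : α ≤ 1)
    (hlam0 : 0 ≤ lam) (hlam1 : lam ≤ 1)
    (hr0 : 0 ≤ r) (hr1 : r ≤ 1)
    (h : 1 - α ≥ Real.sqrt 2 * (Real.exp (-r) * α - lam)) :
    1 - α + (1 - Real.exp (-r)) * α + (1 - r) * lam ≥ 2 - Real.sqrt 2 :=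
  stmt_16_general α lam r hα1 hlam0 hr0 hr1 h
end
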